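/- The critical points of h in (0, 2π) are exactly θ = π/3, θ = π and θ = 5π/3. Moreover, h is strictly increasing on (0, π/3] and strictly decreasing on [π/3, π]; h attains its maximum on (0, 2π), equal to −1/2, exactly at θ = π/3 and θ = 5π/3; and θ = π is a strict local minimum of h with h(π) = −3/2. (The maxima correspond to the elliptic equilibria L₄ and L₅ and the local minimum to the hyperbolic equilibrium near L₃ of the averaged co-orbital problem.) -/

import Mathlib

/-!
Write `s = sin (θ / 2)`. On `(0, 2π)` we have `√(2 - 2 cos θ) = 2 s`, hence
`h'(θ) = cos (θ / 2) (1 - 8 s³) / (4 s²)`: positive on `(0, π/3)` and negative on `(π/3, π)`.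
As `h (2π - θ) = h θ`, this pattern is mirrored on `(π, 2π)`. So `h` has its maximum
`h (π/3) = h (5π/3) = -1/2` and the strict local minimum `h π = -3/2`; `h'` vanishes at these
three extrema by Fermat's rule and nowhere else by the sign pattern.
-/

open Real

/-- The averaged co-orbital perturbation on quasi-circular orbits at exact resonance
(up to the factor `ε`): `h(θ) = cos θ - (2 - 2cos θ)^{-1/2}`. -/
noncomputable def hfun (θ : ℝ) : ℝ := cos θ - 1 / Real.sqrt (2 - 2 * cos θ)

open Set

theorem sqrt_two_sub_two_mul_cos (θ : ℝ) : √(2 - 2 * cos θ) = 2 * |sin (θ / 2)| := by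
  have h : 2 - 2 * cos θ = (2 * sin (θ / 2)) ^ 2 := by
    nth_rw 1 [← mul_div_cancel₀ θ two_ne_zero]
    rw [cos_two_mul_eq_one_sub]
    ring
  rw [h, sqrt_sq_eq_abs, abs_mul, abs_two]

theorem hfun_two_pi_sub (θ : ℝ) : hfun (2 * π - θ) = hfun θ := by
  simp only [hfun, cos_two_pi_sub]

theorem hfun_pi_div_three : hfun (π / 3) = -(1 / 2) := by
  norm_num [hfun, cos_pi_div_three]

theorem hfun_five_pi_div_three : hfun (5 * π / 3) = -(1 / 2) := by
  rw [show 5 * π / 3 = 2 * π - π / 3 by ring, hfun_two_pi_sub, hfun_pi_div_three]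

theorem hfun_pi : hfun π = -(3 / 2) := by
  rw [hfun, cos_pi, show (2 : ℝ) - 2 * -1 = 2 ^ 2 by norm_num, sqrt_sq zero_le_two]
  norm_num

theorem sin_half_pos_of_mem_Ioo {θ : ℝ} (hθ : θ ∈ Ioo 0 (2 * π)) : 0 < sin (θ / 2) :=
  sin_pos_of_pos_of_lt_pi (by linarith [hθ.1]) (by linarith [hθ.2])

theorem hfun_eqOn : EqOn hfun (fun θ => cos θ - 1 / (2 * sin (θ / 2))) (Ioo 0 (2 * π)) := by
  intro θ hθ
  simp only [hfun, sqrt_two_sub_two_mul_cos, abs_of_pos (sin_half_pos_of_mem_Ioo hθ)]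

theorem hasDerivAt_hfun {θ : ℝ} (hθ : θ ∈ Ioo 0 (2 * π)) :
    HasDerivAt hfun (cos (θ / 2) * (1 - 8 * sin (θ / 2) ^ 3) / (4 * sin (θ / 2) ^ 2)) θ := by
  have hs := sin_half_pos_of_mem_Ioo hθ
  have hden : HasDerivAt (fun x => 2 * sin (x / 2)) (cos (θ / 2)) θ :=
    ((((hasDerivAt_id' θ).div_const 2).sin).const_mul 2).congr_deriv (by ring)
  have hloc := (hasDerivAt_cos θ).sub ((hasDerivAt_const θ 1).div hden (by positivity))
  refine (hloc.congr_of_eventuallyEq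
    (hfun_eqOn.eventuallyEq_of_mem (isOpen_Ioo.mem_nhds hθ))).congr_deriv ?_
  rw [show sin θ = 2 * sin (θ / 2) * cos (θ / 2) by rw [← sin_two_mul]; ring_nf]
  field_simp
  ring

theorem deriv_hfun_pos {θ : ℝ} (h0 : 0 < θ) (h1 : θ < π / 3) : 0 < deriv hfun θ := by
  have hθ : θ ∈ Ioo 0 (2 * π) := ⟨h0, by linarith [pi_pos]⟩
  have hs := sin_half_pos_of_mem_Ioo hθ
  have hs' : sin (θ / 2) < 1 / 2 := by
    rw [← sin_pi_div_six]
    exact sin_lt_sin_of_lt_of_le_pi_div_two (by linarith [pi_pos]) (by linarith [pi_pos])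
      (by linarith)
  have hc : 0 < cos (θ / 2) := cos_pos_of_mem_Ioo ⟨by linarith [pi_pos], by linarith⟩
  rw [(hasDerivAt_hfun hθ).deriv]
  have : 0 < 1 - 8 * sin (θ / 2) ^ 3 := by
    nlinarith [pow_lt_one₀ (by positivity : 0 ≤ 2 * sin (θ / 2)) (by linarith) three_ne_zero]
  positivity

theorem deriv_hfun_neg {θ : ℝ} (h0 : π / 3 < θ) (h1 : θ < π) : deriv hfun θ < 0 := by
  have hθ : θ ∈ Ioo 0 (2 * π) := ⟨by linarith [pi_pos], by linarith [pi_pos]⟩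
  have hs' : 1 / 2 < sin (θ / 2) := by
    rw [← sin_pi_div_six]
    exact sin_lt_sin_of_lt_of_le_pi_div_two (by linarith [pi_pos]) (by linarith) (by linarith)
  have hc : 0 < cos (θ / 2) := cos_pos_of_mem_Ioo ⟨by linarith [pi_pos], by linarith⟩
  rw [(hasDerivAt_hfun hθ).deriv]
  have : 1 - 8 * sin (θ / 2) ^ 3 < 0 := by
    nlinarith [one_lt_pow₀ (by linarith : 1 < 2 * sin (θ / 2)) three_ne_zero]
  exact div_neg_of_neg_of_pos (mul_neg_of_pos_of_neg hc this) (by positivity)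

theorem continuousOn_hfun : ContinuousOn hfun (Ioo 0 (2 * π)) :=
  fun _ hθ => (hasDerivAt_hfun hθ).continuousAt.continuousWithinAt

theorem hfun_strictMonoOn : StrictMonoOn hfun (Ioc 0 (π / 3)) := by
  refine strictMonoOn_of_deriv_pos (convex_Ioc _ _)
    (continuousOn_hfun.mono fun θ hθ => ⟨hθ.1, by linarith [hθ.2, pi_pos]⟩) ?_
  rw [interior_Ioc]
  exact fun θ hθ => deriv_hfun_pos hθ.1 hθ.2

theorem hfun_strictAntiOn : StrictAntiOn hfun (Icc (π / 3) π) := by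
  refine strictAntiOn_of_deriv_neg (convex_Icc _ _)
    (continuousOn_hfun.mono fun θ hθ =>
      ⟨by linarith [hθ.1, pi_pos], by linarith [hθ.2, pi_pos]⟩) ?_
  rw [interior_Icc]
  exact fun θ hθ => deriv_hfun_neg hθ.1 hθ.2

theorem hfun_lt_neg_half_of_le_pi {θ : ℝ} (h0 : 0 < θ) (hπ : θ ≤ π) (hne : θ ≠ π / 3) :
    hfun θ < -(1 / 2) := by
  have hpi := pi_pos
  rw [← hfun_pi_div_three]
  rcases hne.lt_or_gt with h | h
  · exact hfun_strictMonoOn ⟨h0, h.le⟩ ⟨by positivity, le_rfl⟩ h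
  · exact hfun_strictAntiOn ⟨le_rfl, by linarith⟩ ⟨h.le, hπ⟩ h

theorem hfun_lt_neg_half {θ : ℝ} (hθ : θ ∈ Ioo 0 (2 * π)) (h₁ : θ ≠ π / 3)
    (h₂ : θ ≠ 5 * π / 3) : hfun θ < -(1 / 2) := by
  rcases le_or_gt θ π with hπ | hπ
  · exact hfun_lt_neg_half_of_le_pi hθ.1 hπ h₁
  · rw [← hfun_two_pi_sub]
    exact hfun_lt_neg_half_of_le_pi (by linarith [hθ.2]) (by linarith)
      fun h => h₂ (by linarith)

theorem hfun_eq_neg_half_iff {θ : ℝ} (hθ : θ ∈ Ioo 0 (2 * π)) :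
    hfun θ = -(1 / 2) ↔ θ = π / 3 ∨ θ = 5 * π / 3 := by
  refine ⟨fun h => ?_, ?_⟩
  · by_contra! hne
    exact (hfun_lt_neg_half hθ hne.1 hne.2).ne h
  · rintro (rfl | rfl)
    exacts [hfun_pi_div_three, hfun_five_pi_div_three]

theorem hfun_le_neg_half {θ : ℝ} (hθ : θ ∈ Ioo 0 (2 * π)) : hfun θ ≤ -(1 / 2) := by
  by_cases h : θ = π / 3 ∨ θ = 5 * π / 3
  · exact ((hfun_eq_neg_half_iff hθ).2 h).le
  · push Not at h
    exact (hfun_lt_neg_half hθ h.1 h.2).le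

theorem hfun_pi_lt_of_abs_sub_lt {θ : ℝ} (hne : θ ≠ π) (hθ : |θ - π| < 2 * π / 3) :
    hfun π < hfun θ := by
  have hpi := pi_pos
  rw [abs_lt] at hθ
  rcases hne.lt_or_gt with h | h
  · exact hfun_strictAntiOn ⟨by linarith, h.le⟩ ⟨by linarith, le_rfl⟩ h
  · rw [← hfun_two_pi_sub θ]
    exact hfun_strictAntiOn ⟨by linarith, by linarith⟩ ⟨by linarith, le_rfl⟩ (by linarith)

theorem isLocalMin_hfun_pi : IsLocalMin hfun π := by
  have hpi := pi_pos
  filter_upwards [Metric.ball_mem_nhds π (by positivity : 0 < 2 * π / 3)] with θ hθ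
  rcases eq_or_ne θ π with rfl | hne
  · exact le_rfl
  · exact (hfun_pi_lt_of_abs_sub_lt hne hθ).le

theorem isLocalMax_hfun_of_eq_neg_half {a : ℝ} (ha : a ∈ Ioo 0 (2 * π))
    (h : hfun a = -(1 / 2)) : IsLocalMax hfun a := by
  filter_upwards [isOpen_Ioo.mem_nhds ha] with θ hθ
  exact h ▸ hfun_le_neg_half hθ

theorem deriv_hfun_two_pi_sub (θ : ℝ) : deriv hfun θ = -deriv hfun (2 * π - θ) := by
  rw [← deriv_comp_const_sub]
  simp only [hfun_two_pi_sub]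

theorem deriv_hfun_ne_zero {θ : ℝ} (hθ : θ ∈ Ioo 0 (2 * π)) (h₁ : θ ≠ π / 3) (h₂ : θ ≠ π)
    (h₃ : θ ≠ 5 * π / 3) : deriv hfun θ ≠ 0 := by
  have of_lt_pi {x : ℝ} (h0 : 0 < x) (hπ : x < π) (hx : x ≠ π / 3) : deriv hfun x ≠ 0 := by
    rcases hx.lt_or_gt with h | h
    exacts [(deriv_hfun_pos h0 h).ne', (deriv_hfun_neg h hπ).ne]
  rcases h₂.lt_or_gt with hπ | hπ
  · exact of_lt_pi hθ.1 hπ h₁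
  · rw [deriv_hfun_two_pi_sub, neg_ne_zero]
    exact of_lt_pi (by linarith [hθ.2]) (by linarith) fun h => h₃ (by linarith)

theorem hfun_critical_set :
    {θ ∈ Ioo (0 : ℝ) (2 * π) | deriv hfun θ = 0} = {π / 3, π, 5 * π / 3} := by
  have hpi := pi_pos
  ext θ
  simp only [mem_insert_iff, mem_singleton_iff]
  constructor
  · rintro ⟨hθ, hd⟩
    by_contra! h
    exact deriv_hfun_ne_zero hθ h.1 h.2.1 h.2.2 hd
  · rintro (rfl | rfl | rfl)
    · have hθ : π / 3 ∈ Ioo 0 (2 * π) := ⟨by positivity, by linarith⟩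
      exact ⟨hθ, (isLocalMax_hfun_of_eq_neg_half hθ hfun_pi_div_three).deriv_eq_zero⟩
    · exact ⟨⟨hpi, by linarith⟩, isLocalMin_hfun_pi.deriv_eq_zero⟩
    · have hθ : 5 * π / 3 ∈ Ioo 0 (2 * π) := ⟨by positivity, by linarith⟩
      exact ⟨hθ, (isLocalMax_hfun_of_eq_neg_half hθ hfun_five_pi_div_three).deriv_eq_zero⟩

/-- Critical points and extrema of `h(θ) = cos θ - (2 - 2cos θ)^{-1/2}` on `(0, 2π)`:
the critical points are exactly `π/3`, `π`, `5π/3`; `h` is strictly increasing on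
`(0, π/3]` and strictly decreasing on `[π/3, π]`; the maximum on `(0, 2π)` equals `-1/2`
and is attained exactly at `π/3` and `5π/3`; and `π` is a strict local minimum with
`h(π) = -3/2`. -/
theorem hfun_critical_points :
    {θ ∈ Set.Ioo (0 : ℝ) (2 * π) | deriv hfun θ = 0} = {π / 3, π, 5 * π / 3} ∧
    StrictMonoOn hfun (Set.Ioc (0 : ℝ) (π / 3)) ∧
    StrictAntiOn hfun (Set.Icc (π / 3) π) ∧
    (∀ θ ∈ Set.Ioo (0 : ℝ) (2 * π), hfun θ ≤ -(1 / 2)) ∧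
    (∀ θ ∈ Set.Ioo (0 : ℝ) (2 * π), (hfun θ = -(1 / 2) ↔ θ = π / 3 ∨ θ = 5 * π / 3)) ∧
    hfun π = -(3 / 2) ∧
    (∃ δ > 0, ∀ θ : ℝ, θ ≠ π → |θ - π| < δ → hfun π < hfun θ) :=
  ⟨hfun_critical_set, hfun_strictMonoOn, hfun_strictAntiOn, fun _ => hfun_le_neg_half,
    fun _ => hfun_eq_neg_half_iff, hfun_pi,
    2 * π / 3, by positivity, fun _ => hfun_pi_lt_of_abs_sub_lt⟩
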